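/- If a Boolean function f : 𝔽₂^n → 𝔽₂ can be computed by an XOR-AND circuit with n−k AND gates, then there exists an affine subspace of 𝔽₂^n of dimension k on which f is affine. -/

import Mathlib

/-- An instruction of an XOR-AND straight-line circuit: an input variable,
the constant 1, an XOR of two previous wires, or an AND of two previous wires.
(Unbounded-fanin XOR is simulated, for free, by binary XORs.) -/
inductive Instr where
  | var : ℕ → Instr
  | one : Instr
  | xor : ℕ → ℕ → Instr
  | and : ℕ → ℕ → Instr

def Instr.isAnd : Instr → Bool
  | .and _ _ => true
  | _ => false

/-- Value of one instruction, given input `x` and previously computed wire values. -/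
def stepEval (n : ℕ) (x : Fin n → ZMod 2) (vals : List (ZMod 2)) : Instr → ZMod 2
  | .var i => if h : i < n then x ⟨i, h⟩ else 0
  | .one => 1
  | .xor a b => vals.getD a 0 + vals.getD b 0
  | .and a b => vals.getD a 0 * vals.getD b 0

/-- The list of all wire values of the circuit `P` on input `x`. -/
def evalProg (n : ℕ) (x : Fin n → ZMod 2) (P : List Instr) : List (ZMod 2) :=
  P.foldl (fun vals ins => vals ++ [stepEval n x vals ins]) []

/-- Number of AND gates in the circuit. -/
def andCount (P : List Instr) : ℕ := (P.filter Instr.isAnd).length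

/-- The circuit `P` with output wires `out` computes the `(n,m)`-function `f`. -/
def Computes (n m : ℕ) (P : List Instr) (out : Fin m → ℕ)
    (f : (Fin n → ZMod 2) → Fin m → ZMod 2) : Prop :=
  ∀ x i, (evalProg n x P).getD (out i) 0 = f x i

/-- The circuit `P` with output wire `out` computes the `(n,1)`-function `f`. -/
def Computes1 (n : ℕ) (P : List Instr) (out : ℕ)
    (f : (Fin n → ZMod 2) → ZMod 2) : Prop :=
  ∀ x, (evalProg n x P).getD out 0 = f x

/-- `f` agrees with an affine function on the set `U`. -/
def AffineOn (n : ℕ) (f : (Fin n → ZMod 2) → ZMod 2) (U : Set (Fin n → ZMod 2)) : Prop :=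
  ∃ a : Fin n → ZMod 2, ∃ b : ZMod 2, ∀ x ∈ U, f x = (∑ i, a i * x i) + b

/-!
Follow the circuit gate by gate, maintaining a linear subspace `W` on which every wire computed
so far agrees with an affine function. XOR gates, inputs and constants preserve this for free.
At an AND gate `g₁ * g₂`, intersect `W` with the kernel of the linear part of `g₁`: this costs at
most one dimension, `g₁` becomes the constant `g₁ 0` there, so `g₁ * g₂` is affine. After `n - k`
AND gates we are left with dimension at least `k`, and any `k`-dimensional subspace of it works,
with the coset taken through the origin.
-/

open Module LinearMap

section Affine

variable {K V : Type*} [Field K] [AddCommGroup V] [Module K V]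

def IsAffineOn (W : Submodule K V) (g : V → K) : Prop :=
  ∃ f : V →ᵃ[K] K, Set.EqOn g f W

theorem AffineMap.isAffineOn (f : V →ᵃ[K] K) (W : Submodule K V) : IsAffineOn W f :=
  ⟨f, Set.eqOn_refl _ _⟩

theorem isAffineOn_const (W : Submodule K V) (t : K) : IsAffineOn W fun _ => t :=
  (AffineMap.const K V t).isAffineOn W

theorem IsAffineOn.mono {W W' : Submodule K V} {g : V → K} (h : IsAffineOn W g) (hW : W' ≤ W) :
    IsAffineOn W' g :=
  let ⟨f, hf⟩ := h; ⟨f, hf.mono hW⟩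

theorem IsAffineOn.add {W : Submodule K V} {g₁ g₂ : V → K} (h₁ : IsAffineOn W g₁)
    (h₂ : IsAffineOn W g₂) : IsAffineOn W (g₁ + g₂) := by
  obtain ⟨f₁, hf₁⟩ := h₁
  obtain ⟨f₂, hf₂⟩ := h₂
  exact ⟨f₁ + f₂, fun x hx => by simp [hf₁ hx, hf₂ hx]⟩

theorem AffineMap.eqOn_ker_linear (f : V →ᵃ[K] K) : Set.EqOn f (fun _ => f 0) (ker f.linear) := by
  intro x hx
  rw [SetLike.mem_coe, mem_ker] at hx
  rw [congrFun f.decomp x, Pi.add_apply, hx, zero_add]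

theorem Submodule.finrank_le_finrank_inf_ker_add_one [FiniteDimensional K V] (W : Submodule K V)
    (φ : V →ₗ[K] K) : finrank K W ≤ finrank K ↥(W ⊓ ker φ) + 1 := by
  have hrank := finrank_range_add_finrank_ker (φ.domRestrict W)
  have hrange : finrank K (range (φ.domRestrict W)) ≤ 1 :=
    (Submodule.finrank_le _).trans (finrank_self K).le
  rw [← Submodule.map_comap_subtype, ← ker_domRestrict, Submodule.finrank_map_subtype_eq]
  omega

theorem IsAffineOn.exists_mul [FiniteDimensional K V] {W : Submodule K V} {g₁ g₂ : V → K}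
    (h₁ : IsAffineOn W g₁) (h₂ : IsAffineOn W g₂) :
    ∃ W' ≤ W, finrank K W ≤ finrank K W' + 1 ∧ IsAffineOn W' (g₁ * g₂) := by
  obtain ⟨f₁, hf₁⟩ := h₁
  obtain ⟨f₂, hf₂⟩ := h₂
  refine ⟨W ⊓ ker f₁.linear, inf_le_left, W.finrank_le_finrank_inf_ker_add_one _,
    f₁ 0 • f₂, fun x hx => ?_⟩
  simp [hf₁ hx.1, hf₂ hx.1, f₁.eqOn_ker_linear hx.2]

theorem Submodule.exists_le_finrank_eq {W : Submodule K V} {k : ℕ} (hk : k ≤ finrank K W) :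
    ∃ W' ≤ W, finrank K W' = k := by
  obtain ⟨v, hv⟩ := exists_linearIndependent_of_le_finrank hk
  refine ⟨span K (Set.range (W.subtype ∘ v)), ?_, ?_⟩
  · rw [Submodule.span_le]
    rintro _ ⟨i, rfl⟩
    exact (v i).2
  · rw [finrank_span_eq_card (hv.map' W.subtype W.ker_subtype), Fintype.card_fin]

theorem IsAffineOn.getD_append {W : Submodule K V} {vals : V → List K} {m : ℕ}
    (hlen : ∀ x, (vals x).length = m) (hvals : ∀ j, IsAffineOn W fun x => (vals x).getD j 0)
    {g : V → K} (hg : IsAffineOn W g) (j : ℕ) :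
    IsAffineOn W fun x => (vals x ++ [g x]).getD j 0 := by
  rcases lt_or_ge j m with hj | hj
  · convert hvals j using 2 with x
    exact List.getD_append _ _ _ _ (by rw [hlen]; exact hj)
  · obtain ⟨i, rfl⟩ := Nat.exists_eq_add_of_le hj
    have hright : ∀ x, (vals x ++ [g x]).getD (m + i) 0 = [g x].getD i 0 := fun x => by
      rw [List.getD_append_right _ _ _ _ ((hlen x).trans_le hj), hlen, Nat.add_sub_cancel_left]
    simp_rw [hright]
    cases i with
    | zero => exact hg
    | succ i => exact isAffineOn_const W 0

end Affine

theorem IsAffineOn.affineOn {n : ℕ} {W : Submodule (ZMod 2) (Fin n → ZMod 2)}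
    {g : (Fin n → ZMod 2) → ZMod 2} (h : IsAffineOn W g) : AffineOn n g W := by
  obtain ⟨f, hf⟩ := h
  refine ⟨fun i => f.linear fun j => if i = j then 1 else 0, f 0, fun x hx => ?_⟩
  rw [hf hx, congrFun f.decomp x, Pi.add_apply, f.linear.pi_apply_eq_sum_univ]
  simp [mul_comm]

section Circuit

variable {n : ℕ}

theorem evalProg_append (x : Fin n → ZMod 2) (P : List Instr) (ins : Instr) :
    evalProg n x (P ++ [ins]) = evalProg n x P ++ [stepEval n x (evalProg n x P) ins] := by
  simp [evalProg, List.foldl_append]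

theorem length_evalProg (x : Fin n → ZMod 2) (P : List Instr) :
    (evalProg n x P).length = P.length := by
  induction P using List.reverseRecOn with
  | nil => rfl
  | append_singleton P ins ih => simp [evalProg_append, ih]

theorem andCount_append (P : List Instr) (ins : Instr) :
    andCount (P ++ [ins]) = andCount P + if ins.isAnd then 1 else 0 := by
  cases ins <;> simp [andCount, Instr.isAnd, List.filter_cons]

theorem exists_isAffineOn_stepEval {W : Submodule (ZMod 2) (Fin n → ZMod 2)}
    {vals : (Fin n → ZMod 2) → List (ZMod 2)}
    (hvals : ∀ j, IsAffineOn W fun x => (vals x).getD j 0) (ins : Instr) :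
    ∃ W' ≤ W, finrank (ZMod 2) W ≤ finrank (ZMod 2) W' + (if ins.isAnd then 1 else 0) ∧
      IsAffineOn W' fun x => stepEval n x (vals x) ins := by
  cases ins with
  | var i =>
    refine ⟨W, le_rfl, by simp, ?_⟩
    by_cases hi : i < n
    · simpa [stepEval, hi] using
        (proj ⟨i, hi⟩ : (Fin n → ZMod 2) →ₗ[ZMod 2] ZMod 2).toAffineMap.isAffineOn W
    · simpa [stepEval, hi] using isAffineOn_const W (0 : ZMod 2)
  | one => exact ⟨W, le_rfl, by simp, isAffineOn_const W 1⟩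
  | xor a b => exact ⟨W, le_rfl, by simp, (hvals a).add (hvals b)⟩
  | and a b =>
    obtain ⟨W', hle, hrank, hmul⟩ := (hvals a).exists_mul (hvals b)
    exact ⟨W', hle, by simpa [Instr.isAnd] using hrank, hmul⟩

theorem exists_isAffineOn_evalProg (P : List Instr) :
    ∃ W : Submodule (ZMod 2) (Fin n → ZMod 2), n ≤ finrank (ZMod 2) W + andCount P ∧
      ∀ j, IsAffineOn W fun x => (evalProg n x P).getD j 0 := by
  induction P using List.reverseRecOn with
  | nil =>
    refine ⟨⊤, by simp, fun j => ?_⟩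
    simpa [evalProg] using isAffineOn_const ⊤ (0 : ZMod 2)
  | append_singleton P ins ih =>
    obtain ⟨W, hrank, hW⟩ := ih
    obtain ⟨W', hle, hrank', hstep⟩ := exists_isAffineOn_stepEval hW ins
    refine ⟨W', by rw [andCount_append]; omega, fun j => ?_⟩
    simp only [evalProg_append]
    exact IsAffineOn.getD_append (length_evalProg · P) (fun j => (hW j).mono hle) hstep j

end Circuit

/-- A function computable by an XOR-AND circuit with n - k AND gates is affine
on some affine subspace of dimension k. -/
theorem affine_subspace_of_few_and_gates (n k : ℕ) (hk : k ≤ n)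
    (f : (Fin n → ZMod 2) → ZMod 2) (P : List Instr) (out : ℕ)
    (hP : Computes1 n P out f) (hc : andCount P = n - k) :
    ∃ (W : Submodule (ZMod 2) (Fin n → ZMod 2)) (c : Fin n → ZMod 2),
      Module.finrank (ZMod 2) W = k ∧ AffineOn n f {x | ∃ w ∈ W, x = c + w} := by
  obtain ⟨W, hrank, hW⟩ := exists_isAffineOn_evalProg (n := n) P
  obtain ⟨W', hle, hW'⟩ := Submodule.exists_le_finrank_eq (W := W) (k := k) (by omega)
  have hf : f = fun x => (evalProg n x P).getD out 0 := funext fun x => (hP x).symm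
  refine ⟨W', 0, hW', ?_⟩
  simpa [hf] using ((hW out).mono hle).affineOn
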